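/- Let Σ be a J×J symmetric matrix in the uniformity class U(q, c₀, M), i.e., σ_{ii} ≤ M and Σ_{j=1}^J |σ_{ij}|^q ≤ c₀ for all i, where 0 ≤ q < 1. Let Σ̂ be any symmetric matrix with max_{i,j} |σ̂_{ij} − σ_{ij}| ≤ s/2 where s > 0. Then the thresholded estimator T_s(Σ̂) satisfies the ℓ∞-operator norm bound ‖T_s(Σ̂) − Σ‖_{(∞,∞)} = max_i Σ_j |(T_s(Σ̂))_{ij} − σ_{ij}| ≤ c₀ · ((3/2)^{1-q} + 2 + 2^q) · s^{1−q}. -/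
import Mathlib


/-- ℓ∞-operator-norm bound for the hard-thresholded estimator: if `Σ` lies in the uniformity
class `U(q, c₀, M)` and `max_{i,j} |σ̂_{ij} − σ_{ij}| ≤ s/2`, then
`max_i ∑_j |(T_s(Σ̂))_{ij} − σ_{ij}| ≤ c₀ ((3/2)^{1-q} + 2 + 2^q) s^{1-q}`. -/
theorem thresholding_linf_operator_bound (J : ℕ)
    (Sig Shat : Matrix (Fin J) (Fin J) ℝ) (q c₀ M s : ℝ)
    (hq0 : 0 ≤ q) (hq1 : q < 1) (hs : 0 < s)
    (hSig : Sig.IsSymm) (hShat : Shat.IsSymm)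
    (hdiag : ∀ i, Sig i i ≤ M)
    (hrow : ∀ i, ∑ j, |Sig i j| ^ q ≤ c₀)
    (hmax : ∀ i j, |Shat i j - Sig i j| ≤ s / 2) :
    ∀ i, ∑ j, |(Matrix.of fun i j => if s ≤ |Shat i j| then Shat i j else 0) i j - Sig i j|
      ≤ c₀ * ((3 / 2 : ℝ) ^ (1 - q) + 2 + 2 ^ q) * s ^ (1 - q) := by
  intro i
  have hc0 : 0 ≤ c₀ :=
    le_trans (Finset.sum_nonneg fun j _ => Real.rpow_nonneg (abs_nonneg _) q) (hrow i)
  have h1q : 0 < 1 - q := by linarith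
  have key : ∀ j, |(Matrix.of fun i j => if s ≤ |Shat i j| then Shat i j else 0) i j - Sig i j|
      ≤ (3 / 2 * s) ^ (1 - q) * |Sig i j| ^ q := by
    intro j
    simp only [Matrix.of_apply]
    by_cases h : s ≤ |Shat i j|
    · simp only [if_pos h]
      have hσ : s / 2 ≤ |Sig i j| := by
        have h2 : |Shat i j| - |Sig i j| ≤ s / 2 :=
          le_trans (abs_sub_abs_le_abs_sub _ _) (hmax i j)
        linarith
      calc |Shat i j - Sig i j| ≤ s / 2 := hmax i j
        _ = (s / 2) ^ (1 - q) * (s / 2) ^ q := by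
            rw [← Real.rpow_add (by linarith : (0:ℝ) < s / 2)]
            norm_num
        _ ≤ (3 / 2 * s) ^ (1 - q) * |Sig i j| ^ q := by
            apply mul_le_mul
            · exact Real.rpow_le_rpow (by linarith) (by linarith) (le_of_lt h1q)
            · exact Real.rpow_le_rpow (by linarith) hσ hq0
            · positivity
            · positivity
    · simp only [if_neg h]
      push_neg at h
      have hσ : |Sig i j| ≤ 3 / 2 * s := by
        have h2 : |Sig i j| - |Shat i j| ≤ s / 2 := by
          refine le_trans (abs_sub_abs_le_abs_sub _ _) ?_
          rw [abs_sub_comm]; exact hmax i j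
        linarith
      rcases eq_or_lt_of_le (abs_nonneg (Sig i j)) with h0 | h0
      · rw [abs_sub_comm, sub_zero, ← h0]
        positivity
      · rw [abs_sub_comm, sub_zero]
        calc |Sig i j| = |Sig i j| ^ (1 - q) * |Sig i j| ^ q := by
              rw [← Real.rpow_add h0]; norm_num
          _ ≤ (3 / 2 * s) ^ (1 - q) * |Sig i j| ^ q := by
              apply mul_le_mul_of_nonneg_right
              · exact Real.rpow_le_rpow (abs_nonneg _) hσ (le_of_lt h1q)
              · positivity
  calc ∑ j, |(Matrix.of fun i j => if s ≤ |Shat i j| then Shat i j else 0) i j - Sig i j|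
      ≤ ∑ j, (3 / 2 * s) ^ (1 - q) * |Sig i j| ^ q := Finset.sum_le_sum fun j _ => key j
    _ = (3 / 2 * s) ^ (1 - q) * ∑ j, |Sig i j| ^ q := by rw [Finset.mul_sum]
    _ ≤ (3 / 2 * s) ^ (1 - q) * c₀ := by
        apply mul_le_mul_of_nonneg_left (hrow i); positivity
    _ ≤ c₀ * ((3 / 2 : ℝ) ^ (1 - q) + 2 + 2 ^ q) * s ^ (1 - q) := by
        rw [Real.mul_rpow (by norm_num) hs.le]
        have hs' : 0 ≤ s ^ (1 - q) := Real.rpow_nonneg hs.le _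
        have h2q : (0:ℝ) ≤ 2 ^ q := Real.rpow_nonneg (by norm_num) q
        nlinarith [mul_nonneg (mul_nonneg hc0 (by linarith : (0:ℝ) ≤ 2 + 2 ^ q)) hs']
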